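/- Second moment of the random-directions (RDSA) gradient estimate: let f : ℝ^d → ℝ be differentiable with L-Lipschitz gradient, let c > 0, and let μ be a Borel probability measure on ℝ^d such that ∫ ‖⟨g, z⟩·z‖² dμ(z) ≤ s·‖g‖² for every g ∈ ℝ^d (for some s > 0) and M := ∫ ‖z‖⁶ dμ(z) < ∞. Then for every x ∈ ℝ^d, ∫ ‖((f(x + c·z) − f(x))/c)·z‖² dμ(z) ≤ 2s·‖∇f(x)‖² + (c²L²/2)·M. -/

import Mathlib

/-!
Write `g = ∇f(x)`. Since `∇f` is `L`-Lipschitz, the first-order Taylor remainder satisfies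
`|f(x + c z) - f(x) - c⟪g, z⟫| ≤ (L/2) c² ‖z‖²`, so the difference quotient is `⟪g, z⟫` up to an
error of size `(L/2) |c| ‖z‖²`. With `b² ≤ 2a² + 2(b - a)²` this gives the pointwise bound
`‖((f(x + c z) - f(x))/c) • z‖² ≤ 2‖⟪g, z⟫ • z‖² + (c² L² / 2) ‖z‖⁶`, which is integrated against `μ`.
-/

open MeasureTheory Set
open scoped RealInnerProductSpace

theorem sq_norm_smul_le_of_abs_sub_le {F : Type*} [NormedAddCommGroup F] [NormedSpace ℝ F]
    {a b r : ℝ} (h : |b - a| ≤ r) (z : F) :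
    ‖b • z‖ ^ 2 ≤ 2 * ‖a • z‖ ^ 2 + 2 * r ^ 2 * ‖z‖ ^ 2 := by
  have hr : (b - a) ^ 2 ≤ r ^ 2 := sq_le_sq' (neg_le_of_abs_le h) (le_of_abs_le h)
  have hb : b ^ 2 ≤ 2 * a ^ 2 + 2 * r ^ 2 := by nlinarith [sq_nonneg (2 * a - b)]
  simp only [norm_smul, mul_pow, Real.norm_eq_abs, sq_abs]
  nlinarith [sq_nonneg ‖z‖]

variable {E : Type*} [NormedAddCommGroup E] [InnerProductSpace ℝ E]

theorem sq_norm_inner_smul_le_sq_mul_pow_six_add (g z : E) :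
    ‖⟪g, z⟫ • z‖ ^ 2 ≤ ‖g‖ ^ 2 * (1 + ‖z‖ ^ 6) := by
  have hinner : ‖⟪g, z⟫ • z‖ ^ 2 ≤ ‖g‖ ^ 2 * ‖z‖ ^ 4 := by
    rw [norm_smul, mul_pow]
    calc ‖⟪g, z⟫‖ ^ 2 * ‖z‖ ^ 2 ≤ (‖g‖ * ‖z‖) ^ 2 * ‖z‖ ^ 2 := by
          gcongr; exact norm_inner_le_norm g z
      _ = ‖g‖ ^ 2 * ‖z‖ ^ 4 := by ring
  have hpow : ‖z‖ ^ 4 ≤ 1 + ‖z‖ ^ 6 := by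
    nlinarith [sq_nonneg (‖z‖ ^ 3 - ‖z‖), sq_nonneg (‖z‖ ^ 2 - 1), sq_nonneg ‖z‖]
  exact hinner.trans (by gcongr)

theorem integrable_sq_norm_inner_smul [MeasurableSpace E] [OpensMeasurableSpace E]
    {μ : Measure E} [IsFiniteMeasure μ] (h6 : Integrable (fun z : E => ‖z‖ ^ 6) μ) (g : E) :
    Integrable (fun z => ‖⟪g, z⟫ • z‖ ^ 2) μ := by
  refine Integrable.mono' (((integrable_const 1).add h6).const_mul (‖g‖ ^ 2))
    ((by fun_prop : Continuous _).aestronglyMeasurable) (.of_forall fun z => ?_)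
  rw [Real.norm_of_nonneg (by positivity)]
  exact sq_norm_inner_smul_le_sq_mul_pow_six_add g z

section Gradient

variable [CompleteSpace E] {f : E → ℝ} {L : ℝ}

theorem abs_sub_sub_inner_gradient_le (hf : Differentiable ℝ f)
    (hL : ∀ u w, ‖gradient f u - gradient f w‖ ≤ L * ‖u - w‖) (x v : E) :
    |f (x + v) - f x - ⟪gradient f x, v⟫| ≤ L / 2 * ‖v‖ ^ 2 := by
  set φ : ℝ → ℝ := fun t => f (x + t • v) - f x - t * ⟪gradient f x, v⟫
  have hφ : ∀ t, HasDerivAt φ ⟪gradient f (x + t • v) - gradient f x, v⟫ t := by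
    intro t
    have hline : HasDerivAt (fun t : ℝ => x + t • v) v t := by
      simpa using ((hasDerivAt_id t).smul_const v).const_add x
    have hcomp := (hf (x + t • v)).hasGradientAt.hasFDerivAt.comp_hasDerivAt t hline
    refine ((hcomp.sub_const (f x)).sub ((hasDerivAt_id t).mul_const _)).congr_deriv ?_
    simp [inner_sub_left]
  have hB : ∀ t, HasDerivAt (fun t : ℝ => L / 2 * t ^ 2 * ‖v‖ ^ 2) (L * t * ‖v‖ ^ 2) t := by
    intro t
    refine (((hasDerivAt_pow 2 t).const_mul (L / 2)).mul_const (‖v‖ ^ 2)).congr_deriv ?_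
    push_cast
    ring
  have hbound : ∀ t ∈ Ico (0 : ℝ) 1,
      ‖⟪gradient f (x + t • v) - gradient f x, v⟫‖ ≤ L * t * ‖v‖ ^ 2 := fun t ht =>
    calc ‖⟪gradient f (x + t • v) - gradient f x, v⟫‖
        ≤ ‖gradient f (x + t • v) - gradient f x‖ * ‖v‖ := norm_inner_le_norm _ _
      _ ≤ L * ‖t • v‖ * ‖v‖ := by gcongr; simpa using hL (x + t • v) x
      _ = L * t * ‖v‖ ^ 2 := by rw [norm_smul, Real.norm_of_nonneg ht.1]; ring
  have key := image_norm_le_of_norm_deriv_right_le_deriv_boundary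
    (fun t _ => (hφ t).continuousAt.continuousWithinAt) (fun t _ => (hφ t).hasDerivWithinAt)
    (by simp [φ]) hB hbound (right_mem_Icc.2 zero_le_one)
  simpa [φ] using key

theorem abs_slope_sub_inner_gradient_le (hf : Differentiable ℝ f)
    (hL : ∀ u w, ‖gradient f u - gradient f w‖ ≤ L * ‖u - w‖) {c : ℝ} (hc : c ≠ 0) (x z : E) :
    |(f (x + c • z) - f x) / c - ⟪gradient f x, z⟫| ≤ L / 2 * |c| * ‖z‖ ^ 2 := by
  have hrem := abs_sub_sub_inner_gradient_le hf hL x (c • z)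
  have hquot : (f (x + c • z) - f x) / c - ⟪gradient f x, z⟫
      = (f (x + c • z) - f x - ⟪gradient f x, c • z⟫) / c := by
    rw [real_inner_smul_right]; field_simp
  rw [hquot, abs_div, div_le_iff₀ (abs_pos.2 hc)]
  calc _ ≤ L / 2 * ‖c • z‖ ^ 2 := hrem
    _ = L / 2 * |c| * ‖z‖ ^ 2 * |c| := by rw [norm_smul, Real.norm_eq_abs]; ring

theorem sq_norm_slope_smul_le (hf : Differentiable ℝ f)
    (hL : ∀ u w, ‖gradient f u - gradient f w‖ ≤ L * ‖u - w‖) {c : ℝ} (hc : c ≠ 0) (x z : E) :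
    ‖((f (x + c • z) - f x) / c) • z‖ ^ 2 ≤
      2 * ‖⟪gradient f x, z⟫ • z‖ ^ 2 + c ^ 2 * L ^ 2 / 2 * ‖z‖ ^ 6 := by
  refine (sq_norm_smul_le_of_abs_sub_le (abs_slope_sub_inner_gradient_le hf hL hc x z) z).trans
    (le_of_eq ?_)
  rw [mul_pow, mul_pow, sq_abs]
  ring

end Gradient

theorem rdsa_second_moment_general
    (d : ℕ)
    (f : EuclideanSpace ℝ (Fin d) → ℝ)
    (hfdiff : Differentiable ℝ f)
    (L : ℝ)
    (hflip : ∀ u w, ‖gradient f u - gradient f w‖ ≤ L * ‖u - w‖)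
    (c : ℝ) (hc : 0 < c)
    (μ : Measure (EuclideanSpace ℝ (Fin d))) [IsProbabilityMeasure μ]
    (s : ℝ)
    (hsbound : ∀ g : EuclideanSpace ℝ (Fin d),
      (∫ z, ‖(⟪g, z⟫ : ℝ) • z‖ ^ 2 ∂μ) ≤ s * ‖g‖ ^ 2)
    (M : ℝ) (hM6 : Integrable (fun z : EuclideanSpace ℝ (Fin d) => ‖z‖ ^ 6) μ)
    (hM : M = ∫ z, ‖z‖ ^ 6 ∂μ)
    (x : EuclideanSpace ℝ (Fin d)) :
    (∫ z, ‖((f (x + c • z) - f x) / c) • z‖ ^ 2 ∂μ) ≤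
      2 * s * ‖gradient f x‖ ^ 2 + (c ^ 2 * L ^ 2 / 2) * M := by
  set g := gradient f x
  have hI := integrable_sq_norm_inner_smul hM6 g
  calc (∫ z, ‖((f (x + c • z) - f x) / c) • z‖ ^ 2 ∂μ)
      ≤ ∫ z, (2 * ‖⟪g, z⟫ • z‖ ^ 2 + c ^ 2 * L ^ 2 / 2 * ‖z‖ ^ 6) ∂μ :=
        integral_mono_of_nonneg (.of_forall fun z => by positivity)
          ((hI.const_mul 2).add (hM6.const_mul _))
          (.of_forall (sq_norm_slope_smul_le hfdiff hflip hc.ne' x))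
    _ = 2 * (∫ z, ‖⟪g, z⟫ • z‖ ^ 2 ∂μ) + c ^ 2 * L ^ 2 / 2 * M := by
        rw [integral_add (hI.const_mul 2) (hM6.const_mul _), integral_const_mul,
          integral_const_mul, hM]
    _ ≤ 2 * s * ‖g‖ ^ 2 + c ^ 2 * L ^ 2 / 2 * M := by
        linarith [hsbound g]

theorem rdsa_second_moment
    (d : ℕ) (hd : 1 ≤ d)
    (f : EuclideanSpace ℝ (Fin d) → ℝ)
    (hfdiff : Differentiable ℝ f)
    (L : ℝ) (hL : 0 < L)
    (hflip : ∀ u w, ‖gradient f u - gradient f w‖ ≤ L * ‖u - w‖)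
    (c : ℝ) (hc : 0 < c)
    (μ : Measure (EuclideanSpace ℝ (Fin d))) [IsProbabilityMeasure μ]
    (s : ℝ) (hs : 0 < s)
    (hsbound : ∀ g : EuclideanSpace ℝ (Fin d),
      (∫ z, ‖(⟪g, z⟫ : ℝ) • z‖ ^ 2 ∂μ) ≤ s * ‖g‖ ^ 2)
    (M : ℝ) (hM6 : Integrable (fun z : EuclideanSpace ℝ (Fin d) => ‖z‖ ^ 6) μ)
    (hM : M = ∫ z, ‖z‖ ^ 6 ∂μ)
    (x : EuclideanSpace ℝ (Fin d)) :
    (∫ z, ‖((f (x + c • z) - f x) / c) • z‖ ^ 2 ∂μ) ≤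
      2 * s * ‖gradient f x‖ ^ 2 + (c ^ 2 * L ^ 2 / 2) * M :=
  rdsa_second_moment_general d f hfdiff L hflip c hc μ s hsbound M hM6 hM x
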